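/- arXiv:math/0608119 — 4 statements merged into one kernel-verified Lean document; each statement's English description precedes it below -/
import Mathlib

section
/- The Boolean algebra P(Θ) of subsets of a finite set Θ, viewed as a (∧,∨,⊥,⊤)-magma, is isomorphic to the pre-Boolean algebra <Θ>_Γ where Γ consists of the constraints θ∧ϑ = ⊥ for all distinct θ,ϑ ∈ Θ together with ⋁_{θ∈Θ} θ = ⊤. -/
set_option linter.unusedSectionVars false


/-- Terms of the free pre-Boolean algebra (with `⊥` and `⊤`) over atoms `Θ`:
negation-free propositional terms. -/
inductive PreTerm (Θ : Type) : Type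
  | bot : PreTerm Θ
  | top : PreTerm Θ
  | atom (t : Θ) : PreTerm Θ
  | and (a b : PreTerm Θ) : PreTerm Θ
  | or (a b : PreTerm Θ) : PreTerm Θ

/-- The disjunction `⋁_{θ ∈ l} θ` of a list of atoms. -/
def bigOr {Θ : Type} : List Θ → PreTerm Θ
  | [] => PreTerm.bot
  | t :: l => PreTerm.or (PreTerm.atom t) (bigOr l)

/-- The congruence defining the pre-Boolean algebra `<Θ>_Γ`: the laws of the free
pre-Boolean algebra (a bounded distributive lattice structure on negation-free terms),
together with the constraints `θ ∧ ϑ = ⊥` for distinct atoms `θ, ϑ`, and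
`⋁_{θ ∈ Θ} θ = ⊤`. -/
inductive SetCongr {Θ : Type} [Fintype Θ] : PreTerm Θ → PreTerm Θ → Prop
  | refl (a : PreTerm Θ) : SetCongr a a
  | symm {a b : PreTerm Θ} : SetCongr a b → SetCongr b a
  | trans {a b c : PreTerm Θ} : SetCongr a b → SetCongr b c → SetCongr a c
  | congr_and {a a' b b' : PreTerm Θ} : SetCongr a a' → SetCongr b b' → SetCongr (a.and b) (a'.and b')
  | congr_or {a a' b b' : PreTerm Θ} : SetCongr a a' → SetCongr b b' → SetCongr (a.or b) (a'.or b')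
  | and_comm (a b : PreTerm Θ) : SetCongr (a.and b) (b.and a)
  | or_comm (a b : PreTerm Θ) : SetCongr (a.or b) (b.or a)
  | and_assoc (a b c : PreTerm Θ) : SetCongr ((a.and b).and c) (a.and (b.and c))
  | or_assoc (a b c : PreTerm Θ) : SetCongr ((a.or b).or c) (a.or (b.or c))
  | and_top (a : PreTerm Θ) : SetCongr (a.and PreTerm.top) a
  | or_bot (a : PreTerm Θ) : SetCongr (a.or PreTerm.bot) a
  | and_bot (a : PreTerm Θ) : SetCongr (a.and PreTerm.bot) PreTerm.bot
  | or_top (a : PreTerm Θ) : SetCongr (a.or PreTerm.top) PreTerm.top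
  | absorb_and (a b : PreTerm Θ) : SetCongr (a.and (a.or b)) a
  | absorb_or (a b : PreTerm Θ) : SetCongr (a.or (a.and b)) a
  | distrib_and (a b c : PreTerm Θ) : SetCongr (a.and (b.or c)) ((a.and b).or (a.and c))
  | distrib_or (a b c : PreTerm Θ) : SetCongr (a.or (b.and c)) ((a.or b).and (a.or c))
  | disjoint_atoms (θ ϑ : Θ) : θ ≠ ϑ → SetCongr ((PreTerm.atom θ).and (PreTerm.atom ϑ)) PreTerm.bot
  | cover : SetCongr (bigOr (Finset.univ : Finset Θ).toList) PreTerm.top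

/-- Evaluation of a term in the Boolean algebra `P(Θ)` of subsets of `Θ`. -/
def evalSet {Θ : Type} [Fintype Θ] [DecidableEq Θ] : PreTerm Θ → Finset Θ
  | PreTerm.bot => ∅
  | PreTerm.top => Finset.univ
  | PreTerm.atom t => {t}
  | PreTerm.and a b => evalSet a ∩ evalSet b
  | PreTerm.or a b => evalSet a ∪ evalSet b

section Aux
variable {Θ : Type} [Fintype Θ] [DecidableEq Θ]

open PreTerm

local infix:50 " ≈c " => SetCongr

lemma sc_and_idem (a : PreTerm Θ) : (a.and a) ≈c a :=
  .trans (.congr_and (.refl a) (.symm (.absorb_or a a))) (.absorb_and a (a.and a))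

lemma sc_or_idem (a : PreTerm Θ) : (a.or a) ≈c a :=
  .trans (.congr_or (.refl a) (.symm (.absorb_and a a))) (.absorb_or a (a.or a))

lemma sc_bot_or (a : PreTerm Θ) : (PreTerm.bot.or a) ≈c a :=
  .trans (.or_comm _ _) (.or_bot a)

lemma sc_bot_and (a : PreTerm Θ) : (PreTerm.bot.and a) ≈c PreTerm.bot :=
  .trans (.and_comm _ _) (.and_bot a)

lemma sc_bigOr_append (l m : List Θ) : (bigOr (l ++ m)) ≈c ((bigOr l).or (bigOr m)) := by
  induction l with
  | nil => exact .symm (sc_bot_or _)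
  | cons t l ih =>
    exact .trans (.congr_or (.refl _) ih) (.symm (.or_assoc _ _ _))

lemma sc_bigOr_perm {l m : List Θ} (h : l.Perm m) : (bigOr l) ≈c (bigOr m) := by
  induction h with
  | nil => exact .refl _
  | cons x _ ih => exact .congr_or (.refl _) ih
  | swap x y l =>
    exact .trans (.symm (.or_assoc _ _ _))
      (.trans (.congr_or (.or_comm _ _) (.refl _)) (.or_assoc _ _ _))
  | trans _ _ ih1 ih2 => exact .trans ih1 ih2

lemma sc_bigOr_cons_mem {t : Θ} {l : List Θ} (h : t ∈ l) : (bigOr (t :: l)) ≈c (bigOr l) := by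
  induction l with
  | nil => cases h
  | cons s l ih =>
    rcases List.mem_cons.mp h with rfl | h
    · exact .trans (.symm (.or_assoc _ _ _)) (.congr_or (sc_or_idem _) (.refl _))
    · exact .trans (sc_bigOr_perm (List.Perm.swap s t l))
        (.trans (.congr_or (.refl _) (ih h)) (.refl _))

/-- `orOf S = ⋁_{θ ∈ S} θ`. -/
noncomputable def orOf (S : Finset Θ) : PreTerm Θ := bigOr S.toList

lemma sc_bigOr_toFinset (l : List Θ) : (bigOr l) ≈c (orOf l.toFinset) := by
  induction l with
  | nil => unfold orOf; rw [show ([]:List Θ).toFinset = ∅ from rfl, Finset.toList_empty]; exact .refl _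
  | cons t l ih =>
    by_cases h : t ∈ l
    · have : (t :: l).toFinset = l.toFinset := by
        ext x; simp only [List.toFinset_cons, Finset.mem_insert, List.mem_toFinset]
        constructor
        · rintro (rfl | hx); exacts [h, hx]
        · exact Or.inr
      rw [this]
      exact .trans (sc_bigOr_cons_mem h) ih
    · have hnot : t ∉ l.toFinset := by simpa using h
      have hperm := Finset.toList_insert hnot
      have : (t :: l).toFinset = insert t l.toFinset := by simp
      rw [this]
      exact .trans (.congr_or (.refl _) ih) (.symm (sc_bigOr_perm hperm))

lemma sc_atom_and_bigOr (t : Θ) (m : List Θ) :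
    ((PreTerm.atom t).and (bigOr m)) ≈c (if t ∈ m then PreTerm.atom t else PreTerm.bot) := by
  induction m with
  | nil => simpa [bigOr] using SetCongr.and_bot _
  | cons s m ih =>
    have h1 : ((PreTerm.atom t).and (bigOr (s :: m))) ≈c
        (((PreTerm.atom t).and (PreTerm.atom s)).or ((PreTerm.atom t).and (bigOr m))) :=
      .distrib_and _ _ _
    by_cases hs : t = s
    · subst hs
      have : (if t ∈ t :: m then PreTerm.atom t else PreTerm.bot) = PreTerm.atom t := by simp
      rw [this]
      refine .trans h1 (.trans (.congr_or (sc_and_idem _) ih) ?_)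
      by_cases hm : t ∈ m
      · rw [if_pos hm]; exact sc_or_idem _
      · rw [if_neg hm]; exact .or_bot _
    · have : (if t ∈ s :: m then PreTerm.atom t else PreTerm.bot)
          = (if t ∈ m then PreTerm.atom t else PreTerm.bot) := by simp [hs]
      rw [this]
      exact .trans h1 (.trans (.congr_or (.disjoint_atoms t s hs) ih)
        (.trans (.or_comm _ _) (.or_bot _)))

lemma sc_bigOr_and_bigOr (l m : List Θ) :
    ((bigOr l).and (bigOr m)) ≈c (bigOr (l.filter (· ∈ m))) := by
  induction l with
  | nil => exact sc_bot_and _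
  | cons t l ih =>
    have h1 : ((bigOr (t :: l)).and (bigOr m)) ≈c
        (((PreTerm.atom t).and (bigOr m)).or ((bigOr l).and (bigOr m))) := by
      refine .trans (.and_comm _ _) (.trans (.distrib_and _ _ _) ?_)
      exact .congr_or (.and_comm _ _) (.and_comm _ _)
    refine .trans h1 ?_
    by_cases hm : t ∈ m
    · have : (t :: l).filter (· ∈ m) = t :: l.filter (· ∈ m) := by simp [hm]
      rw [this]
      refine .congr_or ?_ ih
      simpa [hm] using sc_atom_and_bigOr t m
    · have : (t :: l).filter (· ∈ m) = l.filter (· ∈ m) := by simp [hm]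
      rw [this]
      refine .trans (.congr_or ?_ ih) (sc_bot_or _)
      simpa [hm] using sc_atom_and_bigOr t m

lemma sc_normal (a : PreTerm Θ) : a ≈c (orOf (evalSet a)) := by
  induction a with
  | bot => simp only [evalSet, orOf, Finset.toList_empty]; exact .refl _
  | top => exact .symm .cover
  | atom t =>
    simp only [evalSet, orOf, Finset.toList_singleton]
    exact .symm (.or_bot _)
  | and a b iha ihb =>
    refine .trans (.congr_and iha ihb) ?_
    refine .trans (sc_bigOr_and_bigOr _ _) ?_
    refine .trans (sc_bigOr_toFinset _) ?_
    have : ((evalSet a).toList.filter (· ∈ (evalSet b).toList)).toFinset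
        = evalSet (a.and b) := by
      ext x; simp [evalSet, Finset.mem_toList]
    rw [this]
    exact .refl _
  | or a b iha ihb =>
    refine .trans (.congr_or iha ihb) ?_
    have h1 := sc_bigOr_append (evalSet a).toList (evalSet b).toList
    have h2 := sc_bigOr_toFinset ((evalSet a).toList ++ (evalSet b).toList)
    have h3 : ((evalSet a).toList ++ (evalSet b).toList).toFinset = evalSet (a.or b) := by
      ext x; simp [evalSet, Finset.mem_toList]
    rw [h3] at h2
    exact .trans (.symm h1) h2

lemma evalSet_bigOr (l : List Θ) : evalSet (bigOr l) = l.toFinset := by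
  induction l with
  | nil => rfl
  | cons t l ih => simp [bigOr, evalSet, ih]

end Aux


/-- The Boolean algebra `P(Θ)` of subsets of a finite set `Θ`, viewed as a
`(∧,∨,⊥,⊤)`-magma, is isomorphic to the pre-Boolean algebra `<Θ>_Γ` where `Γ`
consists of `θ ∧ ϑ = ⊥` for distinct `θ, ϑ` and `⋁_{θ∈Θ} θ = ⊤`: evaluation is a
surjective morphism onto `P(Θ)` whose kernel is exactly the congruence, hence it
descends to an isomorphism of magmas. -/
theorem powerset_iso_constrained_preBoolean {Θ : Type} [Fintype Θ] [DecidableEq Θ] :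
    Function.Surjective (evalSet (Θ := Θ)) ∧
    evalSet (PreTerm.bot : PreTerm Θ) = ∅ ∧
    evalSet (PreTerm.top : PreTerm Θ) = Finset.univ ∧
    (∀ a b : PreTerm Θ, evalSet (a.and b) = evalSet a ∩ evalSet b) ∧
    (∀ a b : PreTerm Θ, evalSet (a.or b) = evalSet a ∪ evalSet b) ∧
    (∀ a b : PreTerm Θ, SetCongr a b ↔ evalSet a = evalSet b) := by
  constructor
  · intro S
    refine ⟨orOf S, ?_⟩
    simp [orOf, evalSet_bigOr]
  refine ⟨rfl, rfl, fun a b => rfl, fun a b => rfl, fun a b => ?_⟩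
  constructor
  · intro h
    induction h with
    | refl => rfl
    | symm _ ih => exact ih.symm
    | trans _ _ ih1 ih2 => exact ih1.trans ih2
    | congr_and _ _ ih1 ih2 => simp only [evalSet, ih1, ih2]
    | congr_or _ _ ih1 ih2 => simp only [evalSet, ih1, ih2]
    | and_comm a b => simp [evalSet, Finset.inter_comm]
    | or_comm a b => simp [evalSet, Finset.union_comm]
    | and_assoc a b c => simp [evalSet, Finset.inter_assoc]
    | or_assoc a b c => simp [evalSet, Finset.union_assoc]
    | and_top a => simp [evalSet]
    | or_bot a => simp [evalSet]
    | and_bot a => simp [evalSet]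
    | or_top a => simp [evalSet]
    | absorb_and a b => ext x; simp [evalSet]; tauto
    | absorb_or a b => ext x; simp [evalSet]; tauto
    | distrib_and a b c => ext x; simp [evalSet]; tauto
    | distrib_or a b c => ext x; simp [evalSet]; tauto
    | disjoint_atoms θ ϑ h => ext x; simp [evalSet]; rintro rfl; exact h
    | cover => show _ = Finset.univ; simp [evalSet_bigOr]
  · intro h
    exact .trans (sc_normal a) (h ▸ .symm (sc_normal b))
end

section
/- For a finite totally ordered set (Θ,≤), the insulated pre-Boolean algebra ≪Θ≫_Γ, constrained by φ∧ψ∧η = φ∧η for φ≤ψ≤η, is isomorphic (as a (∧,∨)-magma) to the algebra A of finite unions of sets of the form φ̆∩ψ̆ (φ,ψ ∈ Θ) in P(Θ²), with ∧ mapped to ∩ and ∨ to ∪, via the map sending ⋁_k ⋀_l φ_{k,l} to ⋃_k ⋂_l φ̆_{k,l}. -/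
/-- Terms of the insulated free pre-Boolean algebra `≪Θ≫` (no `⊥`, no `⊤`):
formal `∧`/`∨` combinations of atoms. -/
inductive ITerm (Θ : Type) : Type
  | atom (t : Θ) : ITerm Θ
  | and (a b : ITerm Θ) : ITerm Θ
  | or (a b : ITerm Θ) : ITerm Θ

/-- The congruence of `≪Θ≫_Γ`: laws of the free (insulated) pre-Boolean algebra
(distributive lattice laws) together with the ordering constraints
`φ∧ψ∧η = φ∧η` whenever `φ ≤ ψ ≤ η`. -/
inductive OrdCongr {Θ : Type} [LinearOrder Θ] : ITerm Θ → ITerm Θ → Prop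
  | refl (a : ITerm Θ) : OrdCongr a a
  | symm {a b : ITerm Θ} : OrdCongr a b → OrdCongr b a
  | trans {a b c : ITerm Θ} : OrdCongr a b → OrdCongr b c → OrdCongr a c
  | congr_and {a a' b b' : ITerm Θ} : OrdCongr a a' → OrdCongr b b' →
      OrdCongr (a.and b) (a'.and b')
  | congr_or {a a' b b' : ITerm Θ} : OrdCongr a a' → OrdCongr b b' →
      OrdCongr (a.or b) (a'.or b')
  | and_comm (a b : ITerm Θ) : OrdCongr (a.and b) (b.and a)
  | or_comm (a b : ITerm Θ) : OrdCongr (a.or b) (b.or a)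
  | and_assoc (a b c : ITerm Θ) : OrdCongr ((a.and b).and c) (a.and (b.and c))
  | or_assoc (a b c : ITerm Θ) : OrdCongr ((a.or b).or c) (a.or (b.or c))
  | absorb_and (a b : ITerm Θ) : OrdCongr (a.and (a.or b)) a
  | absorb_or (a b : ITerm Θ) : OrdCongr (a.or (a.and b)) a
  | distrib_and (a b c : ITerm Θ) : OrdCongr (a.and (b.or c)) ((a.and b).or (a.and c))
  | distrib_or (a b c : ITerm Θ) : OrdCongr (a.or (b.and c)) ((a.or b).and (a.or c))
  | order_constraint (φ ψ η : Θ) : φ ≤ ψ → ψ ≤ η →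
      OrdCongr (((ITerm.atom φ).and (ITerm.atom ψ)).and (ITerm.atom η))
        ((ITerm.atom φ).and (ITerm.atom η))

/-- For `φ ∈ Θ`, the set `φ̆ = {(x,y) ∈ Θ² : x ≤ φ ≤ y}`. -/
def breve {Θ : Type} [LinearOrder Θ] (φ : Θ) : Set (Θ × Θ) :=
  {p | p.1 ≤ φ ∧ φ ≤ p.2}

/-- The map `⌣` sending `⋁_k ⋀_l φ_{k,l}` to `⋃_k ⋂_l φ̆_{k,l}` in `P(Θ²)`. -/
def evalBreve {Θ : Type} [LinearOrder Θ] : ITerm Θ → Set (Θ × Θ)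
  | ITerm.atom t => breve t
  | ITerm.and a b => evalBreve a ∩ evalBreve b
  | ITerm.or a b => evalBreve a ∪ evalBreve b

namespace OrderedPB

variable {Θ : Type} [LinearOrder Θ]

theorem sound {a b : ITerm Θ} (h : OrdCongr a b) : evalBreve a = evalBreve b := by
  induction h with
  | refl => rfl
  | symm _ ih => exact ih.symm
  | trans _ _ ih1 ih2 => exact ih1.trans ih2
  | congr_and _ _ ih1 ih2 => show _ ∩ _ = _ ∩ _; rw [ih1, ih2]
  | congr_or _ _ ih1 ih2 => show _ ∪ _ = _ ∪ _; rw [ih1, ih2]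
  | and_comm a b => exact Set.inter_comm _ _
  | or_comm a b => exact Set.union_comm _ _
  | and_assoc a b c => exact Set.inter_assoc _ _ _
  | or_assoc a b c => exact Set.union_assoc _ _ _
  | absorb_and a b => ext z; show z ∈ _ ∩ (_ ∪ _) ↔ _; simp; tauto
  | absorb_or a b => ext z; show z ∈ _ ∪ (_ ∩ _) ↔ _; simp; tauto
  | distrib_and a b c => exact Set.inter_union_distrib_left _ _ _
  | distrib_or a b c => exact Set.union_inter_distrib_left _ _ _
  | order_constraint φ ψ η h1 h2 =>
      ext p
      simp only [evalBreve, breve, Set.mem_inter_iff, Set.mem_setOf_eq]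
      constructor
      · rintro ⟨⟨h3, _⟩, h4⟩; exact ⟨h3, h4⟩
      · rintro ⟨⟨h3, h4⟩, h5, h6⟩
        exact ⟨⟨⟨h3, h4⟩, h3.trans h1, h2.trans h6⟩, h5, h6⟩

instance itermSetoid (Θ : Type) [LinearOrder Θ] : Setoid (ITerm Θ) :=
  ⟨OrdCongr, ⟨OrdCongr.refl, OrdCongr.symm, OrdCongr.trans⟩⟩

def Q (Θ : Type) [LinearOrder Θ] : Type := Quotient (itermSetoid Θ)

def q (a : ITerm Θ) : Q Θ := Quotient.mk (itermSetoid Θ) a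

instance : Min (Q Θ) :=
  ⟨Quotient.map₂ ITerm.and fun _ _ h _ _ h' => OrdCongr.congr_and h h'⟩

instance : Max (Q Θ) :=
  ⟨Quotient.map₂ ITerm.or fun _ _ h _ _ h' => OrdCongr.congr_or h h'⟩

theorem q_inf (a b : ITerm Θ) : q a ⊓ q b = q (a.and b) := rfl
theorem q_sup (a b : ITerm Θ) : q a ⊔ q b = q (a.or b) := rfl

instance : Lattice (Q Θ) :=
  Lattice.mk'
    (fun x y => Quotient.inductionOn₂ x y fun a b => Quotient.sound (OrdCongr.or_comm a b))
    (fun x y z => Quotient.inductionOn₃ x y z fun a b c =>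
      Quotient.sound (OrdCongr.or_assoc a b c))
    (fun x y => Quotient.inductionOn₂ x y fun a b => Quotient.sound (OrdCongr.and_comm a b))
    (fun x y z => Quotient.inductionOn₃ x y z fun a b c =>
      Quotient.sound (OrdCongr.and_assoc a b c))
    (fun x y => Quotient.inductionOn₂ x y fun a b => Quotient.sound (OrdCongr.absorb_or a b))
    (fun x y => Quotient.inductionOn₂ x y fun a b => Quotient.sound (OrdCongr.absorb_and a b))

instance : DistribLattice (Q Θ) :=
  DistribLattice.ofInfSupLe fun x y z => Quotient.inductionOn₃ x y z fun a b c =>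
    le_of_eq (Quotient.sound (OrdCongr.distrib_and a b c))

theorem key {φ ψ η : Θ} (h1 : φ ≤ ψ) (h2 : ψ ≤ η) :
    q (ITerm.atom φ) ⊓ q (ITerm.atom η) ≤ q (ITerm.atom ψ) := by
  have h : (q (ITerm.atom φ) ⊓ q (ITerm.atom ψ)) ⊓ q (ITerm.atom η)
      = q (ITerm.atom φ) ⊓ q (ITerm.atom η) :=
    Quotient.sound (OrdCongr.order_constraint φ ψ η h1 h2)
  rw [← h]
  exact le_trans inf_le_left inf_le_right

def band (r : Θ × Θ) : Q Θ := q (ITerm.atom r.1) ⊓ q (ITerm.atom r.2)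

theorem band_le_band {r s : Θ × Θ} (h1 : r.1 ≤ s.1) (h2 : s.1 ≤ r.2)
    (h3 : r.1 ≤ s.2) (h4 : s.2 ≤ r.2) : band r ≤ band s :=
  le_inf (key h1 h2) (key h3 h4)

def mul (a b : Θ × Θ) : Θ × Θ := (min a.1 b.1, max a.2 b.2)

theorem mul_valid {a b : Θ × Θ} (ha : a.1 ≤ a.2) (_hb : b.1 ≤ b.2) :
    (mul a b).1 ≤ (mul a b).2 :=
  le_trans (min_le_left _ _) (le_trans ha (le_max_left _ _))

theorem band_inf {r s : Θ × Θ} (hr : r.1 ≤ r.2) (hs : s.1 ≤ s.2) :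
    band r ⊓ band s = band (mul r s) := by
  apply le_antisymm
  · apply le_inf
    · rcases le_total r.1 s.1 with h | h
      · rw [show (mul r s).1 = r.1 from min_eq_left h]
        exact le_trans inf_le_left inf_le_left
      · rw [show (mul r s).1 = s.1 from min_eq_right h]
        exact le_trans inf_le_right inf_le_left
    · rcases le_total r.2 s.2 with h | h
      · rw [show (mul r s).2 = s.2 from max_eq_right h]
        exact le_trans inf_le_right inf_le_right
      · rw [show (mul r s).2 = r.2 from max_eq_left h]
        exact le_trans inf_le_left inf_le_right
  · have hm1 : (mul r s).1 ≤ r.1 := min_le_left _ _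
    have hm1' : (mul r s).1 ≤ s.1 := min_le_right _ _
    have hm2 : r.2 ≤ (mul r s).2 := le_max_left _ _
    have hm2' : s.2 ≤ (mul r s).2 := le_max_right _ _
    exact le_inf
      (band_le_band hm1 (le_trans hr hm2) (le_trans hm1 hr) hm2)
      (band_le_band hm1' (le_trans hs hm2') (le_trans hm1' hs) hm2')

def listSup : Θ × Θ → List (Θ × Θ) → Q Θ
  | p, [] => band p
  | p, r :: l => band p ⊔ listSup r l

theorem listSup_append (p : Θ × Θ) (l : List (Θ × Θ)) (r : Θ × Θ) (m : List (Θ × Θ)) :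
    listSup p (l ++ r :: m) = listSup p l ⊔ listSup r m := by
  induction l generalizing p with
  | nil => rfl
  | cons x l ih =>
      show band p ⊔ listSup x (l ++ r :: m) = (band p ⊔ listSup x l) ⊔ listSup r m
      rw [ih]; exact (sup_assoc _ _ _).symm

theorem band_le_listSup {r p : Θ × Θ} {l : List (Θ × Θ)} (h : r ∈ p :: l) :
    band r ≤ listSup p l := by
  induction l generalizing p with
  | nil =>
      rcases List.mem_singleton.mp h with rfl
      exact le_refl _
  | cons x l ih =>
      rcases List.mem_cons.mp h with rfl | h'
      · exact le_sup_left
      · exact le_trans (ih h') le_sup_right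

theorem listSup_le {p : Θ × Θ} {l : List (Θ × Θ)} {x : Q Θ}
    (h : ∀ r ∈ p :: l, band r ≤ x) : listSup p l ≤ x := by
  induction l generalizing p with
  | nil => exact h p (List.mem_singleton.mpr rfl)
  | cons y l ih =>
      exact sup_le (h p List.mem_cons_self)
        (ih fun r hr => h r (List.mem_cons_of_mem _ hr))

theorem band_inf_listSup {r : Θ × Θ} (hr : r.1 ≤ r.2) {p : Θ × Θ} {l : List (Θ × Θ)}
    (hp : p.1 ≤ p.2) (hl : ∀ s ∈ l, s.1 ≤ s.2) :
    band r ⊓ listSup p l = listSup (mul r p) (l.map (mul r)) := by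
  induction l generalizing p with
  | nil => exact band_inf hr hp
  | cons s l ih =>
      show band r ⊓ (band p ⊔ listSup s l) = band (mul r p) ⊔ listSup (mul r s) (l.map (mul r))
      erw [inf_sup_left, band_inf hr hp,
        ih (hl s List.mem_cons_self) (fun t ht => hl t (List.mem_cons_of_mem _ ht))]
      rfl

theorem inf_listSup {pa : Θ × Θ} {la : List (Θ × Θ)} {pb : Θ × Θ} {lb : List (Θ × Θ)}
    (hpa : pa.1 ≤ pa.2) (hla : ∀ r ∈ la, r.1 ≤ r.2)
    (hpb : pb.1 ≤ pb.2) (hlb : ∀ s ∈ lb, s.1 ≤ s.2) :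
    listSup pa la ⊓ listSup pb lb =
      listSup (mul pa pb) (lb.map (mul pa) ++ la.flatMap fun r => (pb :: lb).map (mul r)) := by
  induction la generalizing pa with
  | nil =>
      show band pa ⊓ listSup pb lb = _
      rw [band_inf_listSup hpa hpb hlb]
      simp
  | cons x la ih =>
      have hx : x.1 ≤ x.2 := hla x List.mem_cons_self
      have hla' : ∀ r ∈ la, r.1 ≤ r.2 := fun r hr => hla r (List.mem_cons_of_mem _ hr)
      show (band pa ⊔ listSup x la) ⊓ listSup pb lb = _
      erw [inf_sup_right, band_inf_listSup hpa hpb hlb, ih hx hla']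
      rw [show (x :: la).flatMap (fun r => (pb :: lb).map (mul r))
            = (mul x pb :: lb.map (mul x)) ++ la.flatMap fun r => (pb :: lb).map (mul r) by
          simp [List.flatMap]]
      rw [show lb.map (mul pa) ++ ((mul x pb :: lb.map (mul x)) ++
            la.flatMap fun r => (pb :: lb).map (mul r))
          = lb.map (mul pa) ++ mul x pb :: (lb.map (mul x) ++
            la.flatMap fun r => (pb :: lb).map (mul r)) by simp]
      rw [listSup_append]
      rfl

theorem normal (a : ITerm Θ) : ∃ (p : Θ × Θ) (l : List (Θ × Θ)),
    p.1 ≤ p.2 ∧ (∀ r ∈ l, r.1 ≤ r.2) ∧ q a = listSup p l := by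
  induction a with
  | atom t =>
      refine ⟨(t, t), [], le_refl t, by simp, ?_⟩
      show q (ITerm.atom t) = band (t, t)
      exact (inf_idem _).symm
  | and a b iha ihb =>
      obtain ⟨pa, la, hpa, hla, ha⟩ := iha
      obtain ⟨pb, lb, hpb, hlb, hb⟩ := ihb
      refine ⟨mul pa pb, lb.map (mul pa) ++ la.flatMap fun r => (pb :: lb).map (mul r),
        mul_valid hpa hpb, ?_, ?_⟩
      · intro r hr
        rcases List.mem_append.mp hr with h | h
        · obtain ⟨s, hs, rfl⟩ := List.mem_map.mp h
          exact mul_valid hpa (hlb s hs)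
        · obtain ⟨t, ht, h2⟩ := List.mem_flatMap.mp h
          obtain ⟨s, hs, rfl⟩ := List.mem_map.mp h2
          rcases List.mem_cons.mp hs with rfl | hs'
          · exact mul_valid (hla t ht) hpb
          · exact mul_valid (hla t ht) (hlb s hs')
      · show q a ⊓ q b = _
        rw [ha, hb, inf_listSup hpa hla hpb hlb]
  | or a b iha ihb =>
      obtain ⟨pa, la, hpa, hla, ha⟩ := iha
      obtain ⟨pb, lb, hpb, hlb, hb⟩ := ihb
      refine ⟨pa, la ++ pb :: lb, hpa, ?_, ?_⟩
      · intro r hr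
        rcases List.mem_append.mp hr with h | h
        · exact hla r h
        · rcases List.mem_cons.mp h with rfl | h'
          · exact hpb
          · exact hlb r h'
      · show q a ⊔ q b = _
        rw [ha, hb, listSup_append]

def evalQ : Q Θ → Set (Θ × Θ) := Quotient.lift evalBreve fun _ _ h => sound h

theorem evalQ_q (a : ITerm Θ) : evalQ (q a) = evalBreve a := rfl

theorem evalQ_sup (x y : Q Θ) : evalQ (x ⊔ y) = evalQ x ∪ evalQ y :=
  Quotient.inductionOn₂ x y fun _ _ => rfl

theorem evalQ_band (r : Θ × Θ) : evalQ (band r) = breve r.1 ∩ breve r.2 := rfl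

theorem evalQ_listSup (p : Θ × Θ) (l : List (Θ × Θ)) :
    evalQ (listSup p l) = ⋃ r ∈ (p :: l : List (Θ × Θ)), breve r.1 ∩ breve r.2 := by
  induction l generalizing p with
  | nil => simp [listSup, evalQ_band]
  | cons x l ih =>
      show evalQ (band p ⊔ listSup x l) = _
      rw [evalQ_sup, evalQ_band, ih]
      ext z
      simp only [Set.mem_union, Set.mem_iUnion, List.mem_cons, Set.mem_inter_iff,
        exists_prop]
      constructor
      · rintro (h | ⟨r, hr, h⟩)
        · exact ⟨p, Or.inl rfl, h⟩
        · exact ⟨r, Or.inr hr, h⟩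
      · rintro ⟨r, (rfl | hr), h⟩
        · exact Or.inl h
        · exact Or.inr ⟨r, hr, h⟩

theorem pt_mem {r : Θ × Θ} (hr : r.1 ≤ r.2) :
    ((r.1, r.2) : Θ × Θ) ∈ breve r.1 ∩ breve r.2 :=
  ⟨⟨le_refl _, hr⟩, ⟨hr, le_refl _⟩⟩

theorem listSup_le_of_subset {pa : Θ × Θ} {la : List (Θ × Θ)} {pb : Θ × Θ} {lb : List (Θ × Θ)}
    (hpa : pa.1 ≤ pa.2) (hla : ∀ r ∈ la, r.1 ≤ r.2)
    (h : evalQ (listSup pa la) ⊆ evalQ (listSup pb lb)) :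
    listSup pa la ≤ listSup pb lb := by
  apply listSup_le
  intro r hr
  have hrv : r.1 ≤ r.2 := by
    rcases List.mem_cons.mp hr with rfl | hr'
    · exact hpa
    · exact hla r hr'
  have hmem : ((r.1, r.2) : Θ × Θ) ∈ evalQ (listSup pa la) := by
    rw [evalQ_listSup]
    exact Set.mem_biUnion hr (pt_mem hrv)
  have hmem' := h hmem
  rw [evalQ_listSup] at hmem'
  simp only [Set.mem_iUnion, exists_prop] at hmem'
  obtain ⟨s, hs, ⟨h1, h2⟩, h3, h4⟩ := hmem'
  exact le_trans (band_le_band h1 h2 h3 h4) (band_le_listSup hs)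

theorem complete {a b : ITerm Θ} (h : evalBreve a = evalBreve b) : OrdCongr a b := by
  obtain ⟨pa, la, hpa, hla, ha⟩ := normal a
  obtain ⟨pb, lb, hpb, hlb, hb⟩ := normal b
  have hev : evalQ (listSup pa la) = evalQ (listSup pb lb) := by
    rw [← ha, ← hb, evalQ_q, evalQ_q, h]
  have h1 : listSup pa la ≤ listSup pb lb :=
    listSup_le_of_subset hpa hla (le_of_eq hev)
  have h2 : listSup pb lb ≤ listSup pa la :=
    listSup_le_of_subset hpb hlb (le_of_eq hev.symm)
  have : q a = q b := by rw [ha, hb]; exact le_antisymm h1 h2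
  exact Quotient.exact this

end OrderedPB


/-- For a finite totally ordered set `(Θ,≤)`, the insulated pre-Boolean algebra
`≪Θ≫_Γ` (constrained by `φ∧ψ∧η = φ∧η` for `φ≤ψ≤η`) is isomorphic as a
`(∧,∨)`-magma to the algebra `A` of finite unions of sets `φ̆ ∩ ψ̆` in `P(Θ²)`,
via the map `⌣ : ⋁_k ⋀_l φ_{k,l} ↦ ⋃_k ⋂_l φ̆_{k,l}`: this map sends `∧` to `∩`
and `∨` to `∪`, its image consists of finite unions of sets `φ̆ ∩ ψ̆`, and it
identifies two terms exactly when they are congruent, hence induces an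
isomorphism `≪Θ≫_Γ ≅ A`. -/
theorem ordered_preBoolean_iso {Θ : Type} [LinearOrder Θ] [Fintype Θ] :
    (∀ a b : ITerm Θ, evalBreve (a.and b) = evalBreve a ∩ evalBreve b) ∧
    (∀ a b : ITerm Θ, evalBreve (a.or b) = evalBreve a ∪ evalBreve b) ∧
    (∀ a : ITerm Θ, ∃ (n : ℕ) (φ ψ : Fin n → Θ),
      evalBreve a = ⋃ k : Fin n, breve (φ k) ∩ breve (ψ k)) ∧
    (∀ a b : ITerm Θ, OrdCongr a b ↔ evalBreve a = evalBreve b) := by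
  refine ⟨fun a b => rfl, fun a b => rfl, ?_, fun a b =>
    ⟨OrderedPB.sound, OrderedPB.complete⟩⟩
  intro a
  obtain ⟨p, l, hp, hl, ha⟩ := OrderedPB.normal a
  set L : List (Θ × Θ) := p :: l with hL
  refine ⟨L.length, fun k => (L.get k).1, fun k => (L.get k).2, ?_⟩
  have : evalBreve a = ⋃ r ∈ L, breve r.1 ∩ breve r.2 := by
    rw [← OrderedPB.evalQ_q, ha, OrderedPB.evalQ_listSup]
  rw [this]
  ext z
  simp only [Set.mem_iUnion, exists_prop, List.mem_iff_get]
  constructor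
  · rintro ⟨r, ⟨k, rfl⟩, hz⟩
    exact ⟨k, hz⟩
  · rintro ⟨k, hz⟩
    exact ⟨L.get k, ⟨k, rfl⟩, hz⟩
end

section
/- If ⋃_{k=1}^n (φ̆_k¹ ∩ φ̆_k²) ⊆ ⋃_{l=1}^m (ψ̆_l¹ ∩ ψ̆_l²) with all φ_k^j, ψ_l^j in a totally ordered set Θ, then for every k there exists l with min{φ_k¹,φ_k²} ≤ min{ψ_l¹,ψ_l²} and max{φ_k¹,φ_k²} ≥ max{ψ_l¹,ψ_l²}, and hence φ̆_k¹ ∩ φ̆_k² ⊆ ψ̆_l¹ ∩ ψ̆_l². -/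
/-! The set `φ̆₁ ∩ φ̆₂` consists of the pairs `(x, y)` with `x ≤ min φ₁ φ₂` and `max φ₁ φ₂ ≤ y`,
so it contains the corner `(min φ₁ φ₂, max φ₁ φ₂)`. Whichever `ψ̆_l¹ ∩ ψ̆_l²` covers the corner of
`φ̆_k¹ ∩ φ̆_k²` therefore has a wider interval `[min, max]`, hence contains all of `φ̆_k¹ ∩ φ̆_k²`. -/

section Breve

variable {Θ : Type} [LinearOrder Θ]

theorem mem_breve_inter_breve {a b : Θ} {p : Θ × Θ} :
    p ∈ breve a ∩ breve b ↔ p.1 ≤ min a b ∧ max a b ≤ p.2 := by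
  simp only [breve, Set.mem_inter_iff, Set.mem_ofPred_eq, le_min_iff, max_le_iff]
  tauto

theorem min_max_mem_breve_inter_breve (a b : Θ) :
    (min a b, max a b) ∈ breve a ∩ breve b :=
  mem_breve_inter_breve.2 ⟨le_rfl, le_rfl⟩

theorem breve_inter_breve_subset {a b c d : Θ} (hmin : min a b ≤ min c d)
    (hmax : max c d ≤ max a b) : breve a ∩ breve b ⊆ breve c ∩ breve d := fun _ hp =>
  have hp := mem_breve_inter_breve.1 hp
  mem_breve_inter_breve.2 ⟨hp.1.trans hmin, hmax.trans hp.2⟩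

end Breve

theorem breve_union_subset_general {Θ : Type} [LinearOrder Θ] {n m : ℕ}
    (φ₁ φ₂ : Fin n → Θ) (ψ₁ ψ₂ : Fin m → Θ)
    (hsub : (⋃ k : Fin n, breve (φ₁ k) ∩ breve (φ₂ k)) ⊆
      ⋃ l : Fin m, breve (ψ₁ l) ∩ breve (ψ₂ l)) :
    ∀ k : Fin n, ∃ l : Fin m,
      min (φ₁ k) (φ₂ k) ≤ min (ψ₁ l) (ψ₂ l) ∧
      max (ψ₁ l) (ψ₂ l) ≤ max (φ₁ k) (φ₂ k) ∧
      breve (φ₁ k) ∩ breve (φ₂ k) ⊆ breve (ψ₁ l) ∩ breve (ψ₂ l) := by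
  intro k
  obtain ⟨l, hl⟩ := Set.mem_iUnion.1 <|
    hsub (Set.mem_iUnion_of_mem k (min_max_mem_breve_inter_breve (φ₁ k) (φ₂ k)))
  obtain ⟨hmin, hmax⟩ := mem_breve_inter_breve.1 hl
  exact ⟨l, hmin, hmax, breve_inter_breve_subset hmin hmax⟩

/-- If `⋃_{k} (φ̆_k¹ ∩ φ̆_k²) ⊆ ⋃_{l} (ψ̆_l¹ ∩ ψ̆_l²)` over a totally ordered `Θ`,
then for every `k` there exists `l` with `min{φ_k¹,φ_k²} ≤ min{ψ_l¹,ψ_l²}` and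
`max{φ_k¹,φ_k²} ≥ max{ψ_l¹,ψ_l²}`, and hence `φ̆_k¹ ∩ φ̆_k² ⊆ ψ̆_l¹ ∩ ψ̆_l²`. -/
theorem breve_union_subset {Θ : Type} [LinearOrder Θ] {n m : ℕ}
    (hn : 1 ≤ n) (hm : 1 ≤ m)
    (φ₁ φ₂ : Fin n → Θ) (ψ₁ ψ₂ : Fin m → Θ)
    (hsub : (⋃ k : Fin n, breve (φ₁ k) ∩ breve (φ₂ k)) ⊆
      ⋃ l : Fin m, breve (ψ₁ l) ∩ breve (ψ₂ l)) :
    ∀ k : Fin n, ∃ l : Fin m,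
      min (φ₁ k) (φ₂ k) ≤ min (ψ₁ l) (ψ₂ l) ∧
      max (ψ₁ l) (ψ₂ l) ≤ max (φ₁ k) (φ₂ k) ∧
      breve (φ₁ k) ∩ breve (φ₂ k) ⊆ breve (ψ₁ l) ∩ breve (ψ₂ l) :=
  breve_union_subset_general φ₁ φ₂ ψ₁ ψ₂ hsub
end

section
/- Every element of the ordered pre-Boolean algebra, realized as a finite union of sets φ̆∩ψ̆ in Θ², is an increasing subset of T = {(x,y) ∈ Θ² : x ≤ y}; and when Θ is finite and totally ordered, every nonempty increasing subset θ of T is such a finite union, namely θ = ⋃_{(a,b)∈θ} ă ∩ b̆. -/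
/-- A subset `θ ⊆ Θ²` is increasing if `(x,y) ∈ θ`, `a ≤ x`, `b ≥ y` imply `(a,b) ∈ θ`. -/
def IsIncreasing {Θ : Type} [LinearOrder Θ] (θ : Set (Θ × Θ)) : Prop :=
  ∀ x y a b : Θ, (x, y) ∈ θ → a ≤ x → y ≤ b → (a, b) ∈ θ

section IncreasingSubsets

variable {Θ : Type} [LinearOrder Θ]

theorem breve_subset_le (φ : Θ) : breve φ ⊆ {p : Θ × Θ | p.1 ≤ p.2} :=
  fun _ hp => hp.1.trans hp.2

theorem isIncreasing_breve (φ : Θ) : IsIncreasing (breve φ) :=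
  fun _ _ _ _ hxy ha hb => ⟨ha.trans hxy.1, hxy.2.trans hb⟩

theorem IsIncreasing.inter {θ η : Set (Θ × Θ)} (hθ : IsIncreasing θ) (hη : IsIncreasing η) :
    IsIncreasing (θ ∩ η) :=
  fun x y a b hxy ha hb => ⟨hθ x y a b hxy.1 ha hb, hη x y a b hxy.2 ha hb⟩

theorem IsIncreasing.iUnion {ι : Sort*} {θ : ι → Set (Θ × Θ)} (hθ : ∀ i, IsIncreasing (θ i)) :
    IsIncreasing (⋃ i, θ i) := by
  intro x y a b hxy ha hb
  obtain ⟨i, hi⟩ := Set.mem_iUnion.1 hxy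
  exact Set.mem_iUnion.2 ⟨i, hθ i x y a b hi ha hb⟩

theorem mem_breve_inter_breve_self {p : Θ × Θ} (hp : p.1 ≤ p.2) : p ∈ breve p.1 ∩ breve p.2 :=
  ⟨⟨le_rfl, hp⟩, hp, le_rfl⟩

theorem IsIncreasing.mem_of_mem_breve_inter_breve {θ : Set (Θ × Θ)} (hθ : IsIncreasing θ)
    {p q : Θ × Θ} (hp : p ∈ θ) (hq : q ∈ breve p.1 ∩ breve p.2) : q ∈ θ :=
  hθ p.1 p.2 q.1 q.2 hp hq.1.1 hq.2.2

theorem IsIncreasing.eq_biUnion_breve_inter_breve {θ : Set (Θ × Θ)}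
    (hθT : θ ⊆ {p : Θ × Θ | p.1 ≤ p.2}) (hθ : IsIncreasing θ) :
    θ = ⋃ p ∈ θ, breve p.1 ∩ breve p.2 := by
  refine Set.Subset.antisymm (fun p hp => Set.mem_biUnion hp (mem_breve_inter_breve_self (hθT hp))) ?_
  simp only [Set.iUnion_subset_iff]
  exact fun p hp q hq => hθ.mem_of_mem_breve_inter_breve hp hq

end IncreasingSubsets

theorem increasing_subsets_characterization_general {Θ : Type} [LinearOrder Θ] :
    (∀ (n : ℕ) (φ ψ : Fin n → Θ),
      (⋃ k : Fin n, breve (φ k) ∩ breve (ψ k)) ⊆ {p : Θ × Θ | p.1 ≤ p.2} ∧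
      IsIncreasing (⋃ k : Fin n, breve (φ k) ∩ breve (ψ k))) ∧
    (∀ θ : Set (Θ × Θ), θ ⊆ {p : Θ × Θ | p.1 ≤ p.2} → θ.Nonempty → IsIncreasing θ →
      θ = ⋃ p ∈ θ, breve (Prod.fst p) ∩ breve (Prod.snd p)) := by
  refine ⟨fun n φ ψ => ⟨?_, ?_⟩, fun θ hθT _ hθ => hθ.eq_biUnion_breve_inter_breve hθT⟩
  · exact Set.iUnion_subset fun k => Set.inter_subset_left.trans (breve_subset_le (φ k))
  · exact IsIncreasing.iUnion fun k => (isIncreasing_breve _).inter (isIncreasing_breve _)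

/-- Every element of the ordered pre-Boolean algebra, realized as a finite union of
sets `φ̆ ∩ ψ̆`, is an increasing subset of `T = {(x,y) ∈ Θ² : x ≤ y}`; and when `Θ`
is finite and totally ordered, every nonempty increasing subset `θ` of `T` is such a
finite union, namely `θ = ⋃_{(a,b)∈θ} ă ∩ b̆`. -/
theorem increasing_subsets_characterization {Θ : Type} [LinearOrder Θ] [Fintype Θ] :
    (∀ (n : ℕ) (φ ψ : Fin n → Θ),
      (⋃ k : Fin n, breve (φ k) ∩ breve (ψ k)) ⊆ {p : Θ × Θ | p.1 ≤ p.2} ∧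
      IsIncreasing (⋃ k : Fin n, breve (φ k) ∩ breve (ψ k))) ∧
    (∀ θ : Set (Θ × Θ), θ ⊆ {p : Θ × Θ | p.1 ≤ p.2} → θ.Nonempty → IsIncreasing θ →
      θ = ⋃ p ∈ θ, breve (Prod.fst p) ∩ breve (Prod.snd p)) :=
  increasing_subsets_characterization_general
end
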